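/- arXiv:1803.10111 — 3 statements merged into one kernel-verified Lean document; each statement's English description precedes it below -/
import Mathlib

section
/- Let p₁ > 1/2, p₂ ≥ 0, p₁ > p₂, p₂ ≥ 1 − p₁ − p₂ ≥ 0, and set p'₁ = p₁²/N and p'₂ = (p₂² + (1−p₁−p₂)²)/N where N = p₁² + (1−p₁)². Then p'₁ + p'₂ ≤ 1, p'₁ > p'₂, and p'₂ ≥ 1 − p'₁ − p'₂, i.e. the ordering conditions on the Bell coefficients are preserved by the DEJMPS map on rank-three Bell diagonal states. -/
/-! With `s = 1 - p₁ = p₂ + p₃` (where `p₃ = 1 - p₁ - p₂`), clearing the common denominator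
`N = p₁² + s²` turns the three claims into `p₂² + p₃² ≤ s²`, `p₂² + p₃² < p₁²` and
`s² ≤ 2 (p₂² + p₃²)`. The first holds as `p₂, p₃ ≥ 0`, the second follows from it since
`0 ≤ s < 1/2 < p₁`, and the third is `(p₂ + p₃)² ≤ 2 (p₂² + p₃²)`. -/

/-- The ordering conditions on the Bell coefficients `(x, y, 1 - x - y)` of a rank-three
Bell diagonal state. -/
def IsBellOrdered (x y : ℝ) : Prop :=
  x + y ≤ 1 ∧ y < x ∧ 1 - x - y ≤ y

theorem isBellOrdered_div {a b N : ℝ} (hN : 0 < N) (hsum : a + b ≤ N) (hlt : b < a)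
    (hrest : N - a ≤ 2 * b) : IsBellOrdered (a / N) (b / N) := by
  refine ⟨?_, ?_, ?_⟩
  · rwa [← add_div, div_le_one hN]
  · exact div_lt_div_of_pos_right hlt hN
  · rw [show 1 - a / N - b / N = (N - a - b) / N by field_simp]
    exact div_le_div_of_nonneg_right (by linarith) hN.le

theorem dejmps_preserves_ordering_general (p₁ p₂ : ℝ)
    (h₁ : 1 / 2 < p₁) (h₂ : 0 ≤ p₂)
    (h₅ : 0 ≤ 1 - p₁ - p₂) :
    p₁ ^ 2 / (p₁ ^ 2 + (1 - p₁) ^ 2)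
        + (p₂ ^ 2 + (1 - p₁ - p₂) ^ 2) / (p₁ ^ 2 + (1 - p₁) ^ 2) ≤ 1
      ∧ (p₂ ^ 2 + (1 - p₁ - p₂) ^ 2) / (p₁ ^ 2 + (1 - p₁) ^ 2)
          < p₁ ^ 2 / (p₁ ^ 2 + (1 - p₁) ^ 2)
      ∧ 1 - p₁ ^ 2 / (p₁ ^ 2 + (1 - p₁) ^ 2)
            - (p₂ ^ 2 + (1 - p₁ - p₂) ^ 2) / (p₁ ^ 2 + (1 - p₁) ^ 2)
          ≤ (p₂ ^ 2 + (1 - p₁ - p₂) ^ 2) / (p₁ ^ 2 + (1 - p₁) ^ 2) := by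
  set p₃ := 1 - p₁ - p₂ with hp₃
  have hs : 1 - p₁ = p₂ + p₃ := by rw [hp₃]; ring
  have hN : 0 < p₁ ^ 2 + (1 - p₁) ^ 2 := by
    have : 0 < p₁ := by linarith
    positivity
  have hsum : p₂ ^ 2 + p₃ ^ 2 ≤ (1 - p₁) ^ 2 := hs ▸ pow_add_pow_le h₂ h₅ two_ne_zero
  have hsq : (1 - p₁) ^ 2 < p₁ ^ 2 := pow_lt_pow_left₀ (by linarith) (by linarith) two_ne_zero
  have hhalf : (1 - p₁) ^ 2 ≤ 2 * (p₂ ^ 2 + p₃ ^ 2) := hs ▸ add_sq_le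
  exact isBellOrdered_div hN (by linarith) (by linarith) (by linarith)

/-- The DEJMPS map on rank-three Bell diagonal states preserves the ordering conditions
on the Bell coefficients. -/
theorem dejmps_preserves_ordering (p₁ p₂ : ℝ)
    (h₁ : 1 / 2 < p₁) (h₂ : 0 ≤ p₂) (h₃ : p₂ < p₁)
    (h₄ : 1 - p₁ - p₂ ≤ p₂) (h₅ : 0 ≤ 1 - p₁ - p₂) :
    p₁ ^ 2 / (p₁ ^ 2 + (1 - p₁) ^ 2)
        + (p₂ ^ 2 + (1 - p₁ - p₂) ^ 2) / (p₁ ^ 2 + (1 - p₁) ^ 2) ≤ 1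
      ∧ (p₂ ^ 2 + (1 - p₁ - p₂) ^ 2) / (p₁ ^ 2 + (1 - p₁) ^ 2)
          < p₁ ^ 2 / (p₁ ^ 2 + (1 - p₁) ^ 2)
      ∧ 1 - p₁ ^ 2 / (p₁ ^ 2 + (1 - p₁) ^ 2)
            - (p₂ ^ 2 + (1 - p₁ - p₂) ^ 2) / (p₁ ^ 2 + (1 - p₁) ^ 2)
          ≤ (p₂ ^ 2 + (1 - p₁ - p₂) ^ 2) / (p₁ ^ 2 + (1 - p₁) ^ 2) :=
  dejmps_preserves_ordering_general p₁ p₂ h₁ h₂ h₅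
end

section
/- Success probability bound for mixtures: let ρ = ∑_i λ_i ρ_i with λ_i > 0 and ∑_i λ_i = 1, and suppose a protocol (Λ, P✓) achieves f(Λ,P✓,ρ) = f_opt(ρ) = max_i f_opt(ρ_i), and the index k achieving max_i f(Λ,P✓,ρ_i) is unique in the sense that f(Λ,P✓,ρ_i) < f(Λ,P✓,ρ_k) for all i ≠ k with positive success probability. Then p(Λ,P✓,ρ) ≤ λ_k. -/
open Matrix Kronecker
open scoped ComplexOrder

noncomputable section

/-- Choi matrix of a map from operators on `Fin dIn` to operators on `Fin dOut × Fin dF`. -/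
def choiMat {dIn dOut dF : ℕ}
    (L : Matrix (Fin dIn) (Fin dIn) ℂ → Matrix (Fin dOut × Fin dF) (Fin dOut × Fin dF) ℂ) :
    Matrix ((Fin dOut × Fin dF) × Fin dIn) ((Fin dOut × Fin dF) × Fin dIn) ℂ :=
  fun p q => (L (Matrix.single p.2 q.2 1)) p.1 q.1

/-- A conditional (post-selected) protocol: a CPTP map `Λ` from the input system to
output ⊗ flag, together with a projector `P✓` on the flag register declaring success. -/
structure Protocol (dIn dOut : ℕ) where
  dF : ℕ
  Λ : Matrix (Fin dIn) (Fin dIn) ℂ →ₗ[ℂ] Matrix (Fin dOut × Fin dF) (Fin dOut × Fin dF) ℂ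
  cp : (choiMat (⇑Λ)).PosSemidef
  tp : ∀ ρ, (Λ ρ).trace = ρ.trace
  P : Matrix (Fin dF) (Fin dF) ℂ
  hproj : P * P = P
  hherm : P.IsHermitian

/-- Unnormalized conditional output `Ψ(Λ,P✓,ρ) = tr_F((I ⊗ P✓) Λ(ρ))`. -/
def condOut {dIn dOut : ℕ} (pr : Protocol dIn dOut)
    (ρ : Matrix (Fin dIn) (Fin dIn) ℂ) : Matrix (Fin dOut) (Fin dOut) ℂ :=
  fun o o' => ∑ f : Fin pr.dF,
    (((1 : Matrix (Fin dOut) (Fin dOut) ℂ) ⊗ₖ pr.P) * pr.Λ ρ) (o, f) (o', f)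

/-- Success probability `p = tr Ψ`. -/
def succProb {dIn dOut : ℕ} (pr : Protocol dIn dOut)
    (ρ : Matrix (Fin dIn) (Fin dIn) ℂ) : ℝ :=
  (condOut pr ρ).trace.re

/-- Conditional output fidelity `f = ⟨φ|Ψ|φ⟩ / p` to the target pure state `φ`. -/
def fid {dIn dOut : ℕ} (φ : Fin dOut → ℂ) (pr : Protocol dIn dOut)
    (ρ : Matrix (Fin dIn) (Fin dIn) ℂ) : ℝ :=
  (star φ ⬝ᵥ (condOut pr ρ).mulVec φ).re / succProb pr ρ

/-- `f_opt(ρ)`: the supremum of conditional output fidelities over all protocols with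
positive success probability on `ρ`. -/
def fopt {dIn dOut : ℕ} (φ : Fin dOut → ℂ) (ρ : Matrix (Fin dIn) (Fin dIn) ℂ) : ℝ :=
  sSup {x : ℝ | ∃ pr : Protocol dIn dOut, 0 < succProb pr ρ ∧ fid φ pr ρ = x}


/-!
Both `p` and `⟨φ|Ψ|φ⟩` are linear in the input state, so `p(ρ) f(ρ) = ∑ᵢ λᵢ p(ρᵢ) f(ρᵢ)`:
the fidelity on the mixture is an average of the component fidelities. Each `f(ρᵢ)` with
`p(ρᵢ) > 0` is at most `f(ρₖ)`, and strictly below it for `i ≠ k`, whereas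
`f(ρₖ) ≤ f_opt(ρₖ) ≤ maxᵢ f_opt(ρᵢ) = f(ρ)`. So no component other than `k` can carry weight:
`p(ρᵢ) = 0` for `i ≠ k`, and `p(ρ) = λₖ p(ρₖ) ≤ λₖ`.

The bounds `0 ≤ ⟨φ|Ψ|φ⟩ ≤ p ≤ 1` all come from `tr(Ψ A) = tr((A ⊗ P✓) Λ(ρ))`, a trace of a
product of two positive semidefinite matrices once `A` is (here `A = 1`, `|φ⟩⟨φ|`, `1 - |φ⟩⟨φ|`).
-/

section

open scoped MatrixOrder

theorem Matrix.PosSemidef.trace_mul_nonneg {n : Type*} [Fintype n] [DecidableEq n]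
    {A X : Matrix n n ℂ} (hA : A.PosSemidef) (hX : X.PosSemidef) : 0 ≤ (A * X).trace := by
  obtain ⟨B, rfl⟩ := CStarAlgebra.nonneg_iff_eq_star_mul_self.mp hA.nonneg
  rw [Matrix.mul_assoc, Matrix.trace_mul_comm, star_eq_conjTranspose]
  exact (hX.mul_mul_conjTranspose_same B).trace_nonneg

theorem Matrix.dotProduct_mulVec_eq_trace_mul_vecMulVec {n R : Type*} [Fintype n]
    [CommSemiring R] (u w : n → R) (M : Matrix n n R) :
    u ⬝ᵥ M *ᵥ w = (M * vecMulVec w u).trace := by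
  simp only [dotProduct, mulVec, trace, diag, mul_apply, vecMulVec_apply, Finset.mul_sum]
  exact Finset.sum_congr rfl fun _ _ => Finset.sum_congr rfl fun _ _ => by ring

theorem Matrix.isStarProjection_vecMulVec_self_star {n : Type*} [Fintype n] {φ : n → ℂ}
    (hφ : star φ ⬝ᵥ φ = 1) : IsStarProjection (vecMulVec φ (star φ)) :=
  ⟨by rw [IsIdempotentElem, vecMulVec_mul_vecMulVec, hφ, one_smul],
    by rw [IsSelfAdjoint, star_eq_conjTranspose, conjTranspose_vecMulVec, star_star]⟩

theorem apply_eq_sum_choiMat {dIn dOut dF : ℕ}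
    (L : Matrix (Fin dIn) (Fin dIn) ℂ →ₗ[ℂ] Matrix (Fin dOut × Fin dF) (Fin dOut × Fin dF) ℂ)
    (ρ : Matrix (Fin dIn) (Fin dIn) ℂ) (a b : Fin dOut × Fin dF) :
    L ρ a b = ∑ i, ∑ j, ρ i j * choiMat L (a, i) (b, j) := by
  conv_lhs => rw [Matrix.matrix_eq_sum_single ρ]
  have hsingle (i j : Fin dIn) : Matrix.single i j (ρ i j) = ρ i j • Matrix.single i j 1 := by
    rw [Matrix.smul_single, smul_eq_mul, mul_one]
  simp only [hsingle, map_sum, map_smul, Matrix.sum_apply, Matrix.smul_apply, smul_eq_mul,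
    choiMat]

theorem posSemidef_map_of_posSemidef_choiMat {dIn dOut dF : ℕ}
    {L : Matrix (Fin dIn) (Fin dIn) ℂ →ₗ[ℂ] Matrix (Fin dOut × Fin dF) (Fin dOut × Fin dF) ℂ}
    (hL : (choiMat L).PosSemidef) {ρ : Matrix (Fin dIn) (Fin dIn) ℂ} (hρ : ρ.PosSemidef) :
    (L ρ).PosSemidef := by
  obtain ⟨m, v, rfl⟩ := Matrix.posSemidef_iff_eq_sum_vecMulVec.mp hρ
  -- `L (v v*)` is the compression `Vᴴ C V` of the Choi matrix `C` by `V = 1 ⊗ |v̄⟩`.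
  let V (k : Fin m) : Matrix ((Fin dOut × Fin dF) × Fin dIn) (Fin dOut × Fin dF) ℂ :=
    Matrix.of fun q c => if q.1 = c then star (v k q.2) else 0
  have hV (k : Fin m) :
      L (Matrix.vecMulVec (v k) (star (v k))) = (V k)ᴴ * choiMat L * V k := by
    ext a c
    simp only [V, apply_eq_sum_choiMat, vecMulVec_apply, Pi.star_apply, RCLike.star_def,
      Matrix.mul_apply, conjTranspose_apply, of_apply, apply_ite (starRingEnd ℂ),
      RingHomCompTriple.comp_apply, RingHom.id_apply, map_zero, ite_mul, zero_mul, mul_ite,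
      mul_zero, Fintype.sum_prod_type (α₁ := Fin dOut × Fin dF), Finset.sum_ite_irrel,
      Finset.sum_const_zero, Finset.sum_ite_eq', Finset.mem_univ, ↓reduceIte, Finset.sum_mul]
    exact Finset.sum_comm.trans (by simp only [mul_right_comm])
  rw [map_sum]
  exact Matrix.posSemidef_sum _ fun k _ => hV k ▸ hL.conjTranspose_mul_mul_same (V k)

namespace Protocol

variable {dIn dOut : ℕ} (pr : Protocol dIn dOut)

theorem map_posSemidef {ρ : Matrix (Fin dIn) (Fin dIn) ℂ} (hρ : ρ.PosSemidef) :
    (pr.Λ ρ).PosSemidef :=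
  posSemidef_map_of_posSemidef_choiMat pr.cp hρ

theorem isStarProjection_P : IsStarProjection pr.P :=
  ⟨pr.hproj, pr.hherm⟩

theorem isStarProjection_one_kronecker_P :
    IsStarProjection ((1 : Matrix (Fin dOut) (Fin dOut) ℂ) ⊗ₖ pr.P) :=
  ⟨by rw [IsIdempotentElem, ← mul_kronecker_mul, Matrix.one_mul, pr.hproj],
    by rw [IsSelfAdjoint, star_eq_conjTranspose, conjTranspose_kronecker, conjTranspose_one,
      pr.hherm.eq]⟩

end Protocol

variable {dIn dOut : ℕ} (pr : Protocol dIn dOut)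

theorem trace_condOut_mul (ρ : Matrix (Fin dIn) (Fin dIn) ℂ)
    (A : Matrix (Fin dOut) (Fin dOut) ℂ) :
    (condOut pr ρ * A).trace = ((A ⊗ₖ pr.P) * pr.Λ ρ).trace := by
  simp only [trace, diag_apply, mul_apply, condOut, kroneckerMap_apply, one_apply, ite_mul,
    one_mul, zero_mul, Fintype.sum_prod_type, Finset.sum_ite_irrel, Finset.sum_const_zero,
    Finset.sum_ite_eq, Finset.mem_univ, ↓reduceIte, Finset.sum_mul]
  refine Finset.sum_comm.trans (Finset.sum_congr rfl fun _ _ => Finset.sum_comm.trans ?_)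
  exact Finset.sum_congr rfl fun _ _ =>
    Finset.sum_congr rfl fun _ _ => Finset.sum_congr rfl fun _ _ => by ring

theorem re_trace_condOut_mul_nonneg {ρ : Matrix (Fin dIn) (Fin dIn) ℂ} (hρ : ρ.PosSemidef)
    {A : Matrix (Fin dOut) (Fin dOut) ℂ} (hA : A.PosSemidef) :
    0 ≤ (condOut pr ρ * A).trace.re := by
  have hAP : (A ⊗ₖ pr.P).PosSemidef := hA.kronecker pr.isStarProjection_P.nonneg.posSemidef
  rw [trace_condOut_mul]
  exact (Complex.nonneg_iff.mp (hAP.trace_mul_nonneg (pr.map_posSemidef hρ))).1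

theorem re_trace_condOut_sum_smul_mul {ι : Type*} [Fintype ι] (w : ι → ℝ)
    (ρ : ι → Matrix (Fin dIn) (Fin dIn) ℂ) (A : Matrix (Fin dOut) (Fin dOut) ℂ) :
    (condOut pr (∑ i, (w i : ℂ) • ρ i) * A).trace.re
      = ∑ i, w i * (condOut pr (ρ i) * A).trace.re := by
  have hlin : condOut pr (∑ i, (w i : ℂ) • ρ i) = ∑ i, (w i : ℂ) • condOut pr (ρ i) := by
    ext o o'
    simp only [condOut, map_sum, map_smul, Matrix.mul_smul, Matrix.sum_apply,
      Matrix.smul_apply, smul_eq_mul, Finset.mul_sum]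
    exact Finset.sum_comm
  simp only [hlin, Finset.sum_mul, Matrix.smul_mul, trace_sum, trace_smul, Complex.re_sum,
    smul_eq_mul, Complex.re_ofReal_mul]

theorem succProb_nonneg {ρ : Matrix (Fin dIn) (Fin dIn) ℂ} (hρ : ρ.PosSemidef) :
    0 ≤ succProb pr ρ := by
  simpa [succProb] using re_trace_condOut_mul_nonneg pr hρ PosSemidef.one

theorem succProb_le_one {ρ : Matrix (Fin dIn) (Fin dIn) ℂ} (hρ : ρ.PosSemidef)
    (hρ1 : ρ.trace = 1) : succProb pr ρ ≤ 1 := by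
  have h := pr.isStarProjection_one_kronecker_P.one_sub.nonneg.posSemidef.trace_mul_nonneg
    (pr.map_posSemidef hρ)
  rw [Matrix.sub_mul, Matrix.one_mul, trace_sub, pr.tp, hρ1, ← trace_condOut_mul,
    Matrix.mul_one] at h
  simpa [succProb] using (Complex.nonneg_iff.mp h).1

theorem succProb_sum_smul {ι : Type*} [Fintype ι] (w : ι → ℝ)
    (ρ : ι → Matrix (Fin dIn) (Fin dIn) ℂ) :
    succProb pr (∑ i, (w i : ℂ) • ρ i) = ∑ i, w i * succProb pr (ρ i) := by
  simpa [succProb] using re_trace_condOut_sum_smul_mul pr w ρ 1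

def fidNum (φ : Fin dOut → ℂ) (pr : Protocol dIn dOut) (ρ : Matrix (Fin dIn) (Fin dIn) ℂ) : ℝ :=
  (star φ ⬝ᵥ (condOut pr ρ).mulVec φ).re

theorem fid_eq_fidNum_div (φ : Fin dOut → ℂ) (ρ : Matrix (Fin dIn) (Fin dIn) ℂ) :
    fid φ pr ρ = fidNum φ pr ρ / succProb pr ρ :=
  rfl

theorem fidNum_eq_re_trace (φ : Fin dOut → ℂ) (ρ : Matrix (Fin dIn) (Fin dIn) ℂ) :
    fidNum φ pr ρ = (condOut pr ρ * vecMulVec φ (star φ)).trace.re := by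
  rw [fidNum, dotProduct_mulVec_eq_trace_mul_vecMulVec]

theorem fidNum_nonneg (φ : Fin dOut → ℂ) {ρ : Matrix (Fin dIn) (Fin dIn) ℂ}
    (hρ : ρ.PosSemidef) : 0 ≤ fidNum φ pr ρ := by
  rw [fidNum_eq_re_trace]
  exact re_trace_condOut_mul_nonneg pr hρ (posSemidef_vecMulVec_self_star φ)

theorem fidNum_le_succProb {φ : Fin dOut → ℂ} (hφ : star φ ⬝ᵥ φ = 1)
    {ρ : Matrix (Fin dIn) (Fin dIn) ℂ} (hρ : ρ.PosSemidef) :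
    fidNum φ pr ρ ≤ succProb pr ρ := by
  have h := re_trace_condOut_mul_nonneg pr hρ
    (isStarProjection_vecMulVec_self_star hφ).one_sub.nonneg.posSemidef
  rw [Matrix.mul_sub, Matrix.mul_one, trace_sub, Complex.sub_re] at h
  rw [fidNum_eq_re_trace, succProb]
  linarith

theorem fidNum_sum_smul (φ : Fin dOut → ℂ) {ι : Type*} [Fintype ι] (w : ι → ℝ)
    (ρ : ι → Matrix (Fin dIn) (Fin dIn) ℂ) :
    fidNum φ pr (∑ i, (w i : ℂ) • ρ i) = ∑ i, w i * fidNum φ pr (ρ i) := by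
  simp only [fidNum_eq_re_trace, re_trace_condOut_sum_smul_mul]

theorem succProb_mul_fid {φ : Fin dOut → ℂ} (hφ : star φ ⬝ᵥ φ = 1)
    {ρ : Matrix (Fin dIn) (Fin dIn) ℂ} (hρ : ρ.PosSemidef) :
    succProb pr ρ * fid φ pr ρ = fidNum φ pr ρ := by
  rcases (succProb_nonneg pr hρ).eq_or_lt with hp | hp
  · rw [← hp, zero_mul]
    exact le_antisymm (fidNum_nonneg pr φ hρ) (hp ▸ fidNum_le_succProb pr hφ hρ)
  · rw [fid_eq_fidNum_div, mul_div_cancel₀ _ hp.ne']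

theorem fid_le_one {φ : Fin dOut → ℂ} (hφ : star φ ⬝ᵥ φ = 1)
    {ρ : Matrix (Fin dIn) (Fin dIn) ℂ} (hρ : ρ.PosSemidef) : fid φ pr ρ ≤ 1 :=
  div_le_one_of_le₀ (fidNum_le_succProb pr hφ hρ) (succProb_nonneg pr hρ)

theorem fid_le_fopt {φ : Fin dOut → ℂ} (hφ : star φ ⬝ᵥ φ = 1)
    {ρ : Matrix (Fin dIn) (Fin dIn) ℂ} (hρ : ρ.PosSemidef) (hp : 0 < succProb pr ρ) :
    fid φ pr ρ ≤ fopt φ ρ :=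
  le_csSup ⟨1, by rintro _ ⟨pr', -, rfl⟩; exact fid_le_one pr' hφ hρ⟩ ⟨pr, hp, rfl⟩

theorem fid_sum_smul_lt {φ : Fin dOut → ℂ} (hφ : star φ ⬝ᵥ φ = 1) {ι : Type*} [Fintype ι]
    {w : ι → ℝ} (hw : ∀ i, 0 ≤ w i) {ρ : ι → Matrix (Fin dIn) (Fin dIn) ℂ}
    (hρ : ∀ i, (ρ i).PosSemidef) (hp : 0 < succProb pr (∑ i, (w i : ℂ) • ρ i)) {c : ℝ}
    (hle : ∀ i, 0 < succProb pr (ρ i) → fid φ pr (ρ i) ≤ c)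
    {j : ι} (hwj : 0 < w j) (hpj : 0 < succProb pr (ρ j)) (hlt : fid φ pr (ρ j) < c) :
    fid φ pr (∑ i, (w i : ℂ) • ρ i) < c := by
  refine lt_of_mul_lt_mul_left ?_ hp.le
  rw [fid_eq_fidNum_div, mul_div_cancel₀ _ hp.ne', fidNum_sum_smul, succProb_sum_smul,
    Finset.sum_mul]
  refine Finset.sum_lt_sum (fun i _ => ?_) ⟨j, Finset.mem_univ j, ?_⟩
  · rw [← succProb_mul_fid pr hφ (hρ i), ← mul_assoc]
    rcases (succProb_nonneg pr (hρ i)).eq_or_lt with hpi | hpi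
    · simp [← hpi]
    · exact mul_le_mul_of_nonneg_left (hle i hpi) (mul_nonneg (hw i) hpi.le)
  · rw [← succProb_mul_fid pr hφ (hρ j), ← mul_assoc]
    exact mul_lt_mul_of_pos_left hlt (mul_pos hwj hpj)

end

theorem succProb_mixture_le_weight_general {dIn dOut : ℕ} (φ : Fin dOut → ℂ)
    (hφ : ∑ o, star (φ o) * φ o = 1)
    {ι : Type} [Fintype ι] [Nonempty ι]
    (lam : ι → ℝ) (hlam : ∀ i, 0 < lam i)
    (ρc : ι → Matrix (Fin dIn) (Fin dIn) ℂ)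
    (hpos : ∀ i, (ρc i).PosSemidef) (htr : ∀ i, (ρc i).trace = 1)
    (pr : Protocol dIn dOut)
    (hp : 0 < succProb pr (∑ i, (lam i : ℂ) • ρc i))
    (hopt : fid φ pr (∑ i, (lam i : ℂ) • ρc i) = fopt φ (∑ i, (lam i : ℂ) • ρc i))
    (hmaxcomp : fopt φ (∑ i, (lam i : ℂ) • ρc i)
      = Finset.univ.sup' Finset.univ_nonempty (fun i => fopt φ (ρc i)))
    (k : ι) (hpk : 0 < succProb pr (ρc k))
    (hkunique : ∀ i, i ≠ k → 0 < succProb pr (ρc i) → fid φ pr (ρc i) < fid φ pr (ρc k)) :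
    succProb pr (∑ i, (lam i : ℂ) • ρc i) ≤ lam k := by
  have hfid_ge : fid φ pr (ρc k) ≤ fid φ pr (∑ i, (lam i : ℂ) • ρc i) := by
    rw [hopt, hmaxcomp]
    exact (fid_le_fopt pr hφ (hpos k) hpk).trans
      (Finset.le_sup' (fun i => fopt φ (ρc i)) (Finset.mem_univ k))
  have hzero : ∀ i ≠ k, succProb pr (ρc i) = 0 := by
    intro i hik
    by_contra hne
    have hpi := (succProb_nonneg pr (hpos i)).lt_of_ne' hne
    have hle (j) (hpj : 0 < succProb pr (ρc j)) : fid φ pr (ρc j) ≤ fid φ pr (ρc k) := by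
      rcases eq_or_ne j k with rfl | hjk
      exacts [le_rfl, (hkunique j hjk hpj).le]
    exact hfid_ge.not_gt <| fid_sum_smul_lt pr hφ (fun j => (hlam j).le) hpos hp hle (hlam i) hpi
      (hkunique i hik hpi)
  calc succProb pr (∑ i, (lam i : ℂ) • ρc i) = ∑ i, lam i * succProb pr (ρc i) :=
        succProb_sum_smul pr lam ρc
    _ = lam k * succProb pr (ρc k) :=
        Finset.sum_eq_single k (fun i _ hik => by rw [hzero i hik, mul_zero]) (by simp)
    _ ≤ lam k := mul_le_of_le_one_right (hlam k).le (succProb_le_one pr (hpos k) (htr k))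

/-- Success probability bound for mixtures: if a protocol attains the optimal fidelity of a
mixture, which equals the maximum of the optimal fidelities of the components, and the component
`k` maximizing the protocol's conditional fidelity is unique, then the success probability on
the mixture is at most the weight `λ_k`. -/
theorem succProb_mixture_le_weight {dIn dOut : ℕ} (φ : Fin dOut → ℂ)
    (hφ : ∑ o, star (φ o) * φ o = 1)
    {ι : Type} [Fintype ι] [Nonempty ι]
    (lam : ι → ℝ) (hlam : ∀ i, 0 < lam i) (hsum : ∑ i, lam i = 1)
    (ρc : ι → Matrix (Fin dIn) (Fin dIn) ℂ)
    (hpos : ∀ i, (ρc i).PosSemidef) (htr : ∀ i, (ρc i).trace = 1)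
    (pr : Protocol dIn dOut)
    (hp : 0 < succProb pr (∑ i, (lam i : ℂ) • ρc i))
    (hopt : fid φ pr (∑ i, (lam i : ℂ) • ρc i) = fopt φ (∑ i, (lam i : ℂ) • ρc i))
    (hmaxcomp : fopt φ (∑ i, (lam i : ℂ) • ρc i)
      = Finset.univ.sup' Finset.univ_nonempty (fun i => fopt φ (ρc i)))
    (k : ι) (hpk : 0 < succProb pr (ρc k))
    (hkmax : ∀ i, 0 < succProb pr (ρc i) → fid φ pr (ρc i) ≤ fid φ pr (ρc k))
    (hkunique : ∀ i, i ≠ k → 0 < succProb pr (ρc i) → fid φ pr (ρc i) < fid φ pr (ρc k)) :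
    succProb pr (∑ i, (lam i : ℂ) • ρc i) ≤ lam k :=
  succProb_mixture_le_weight_general φ hφ lam hlam ρc hpos htr pr hp hopt hmaxcomp k hpk hkunique

end
end

section
/- EPL-D extracts a perfect Bell state: given two copies of the R state τ = p|Ψ⁺⟩⟨Ψ⁺| + (1−p)|11⟩⟨11|, applying bilateral CNOTs (Alice's CNOT from qubit A1 to A2, Bob's from B1 to B2), measuring the target qubits A2, B2 in the computational basis and post-selecting on both outcomes being 1, yields outcome probability p²/2, and the post-measurement state on A1B1 is exactly the maximally entangled state |Ψ⁺⟩⟨Ψ⁺|. -/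
/-!
The bilateral CNOT is the permutation matrix of `(x, z) ↦ (x, z + x)`, so post-selecting
`z + x = 11` leaves on `A1 B1` the block `τ x y * τ x̄ ȳ`, where `x̄ = x + 11` is the bitwise
complement. Complementing fixes the support `{01, 10}` of `|Ψ⁺⟩` and sends `11` to `00`, where `τ`
vanishes, so only the `|Ψ⁺⟩⟨Ψ⁺| ⊗ |Ψ⁺⟩⟨Ψ⁺|` term survives: the block is
`(p/2)² · 2|Ψ⁺⟩⟨Ψ⁺| = (p²/2) |Ψ⁺⟩⟨Ψ⁺|`, and its trace `p²/2` is the success probability.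
-/

open Matrix Kronecker

noncomputable section

def ket (a b : Fin 2) : Fin 2 × Fin 2 → ℂ := fun i => if i = (a, b) then 1 else 0

/-- `|Ψ⁺⟩ = (|01⟩ + |10⟩)/√2`. -/
def PsiPlus : Fin 2 × Fin 2 → ℂ := fun i => ((Real.sqrt 2)⁻¹ : ℝ) * (ket 0 1 i + ket 1 0 i)

def proj (v : Fin 2 × Fin 2 → ℂ) : Matrix (Fin 2 × Fin 2) (Fin 2 × Fin 2) ℂ :=
  Matrix.vecMulVec v (star v)

/-- The R state `τ = p|Ψ⁺⟩⟨Ψ⁺| + (1−p)|11⟩⟨11|`. -/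
def Rstate (p : ℝ) : Matrix (Fin 2 × Fin 2) (Fin 2 × Fin 2) ℂ :=
  (p : ℂ) • proj PsiPlus + ((1 - p : ℝ) : ℂ) • proj (ket 1 1)

/-- Bilateral CNOTs: Alice's CNOT from `A1` to `A2` and Bob's from `B1` to `B2`;
the registers are ordered `(A1, B1) × (A2, B2)`. -/
def bilateralCNOT :
    Matrix ((Fin 2 × Fin 2) × (Fin 2 × Fin 2)) ((Fin 2 × Fin 2) × (Fin 2 × Fin 2)) ℂ :=
  fun i j =>
    if i.1.1 = j.1.1 ∧ i.1.2 = j.1.2 ∧ i.2.1 = j.2.1 + j.1.1 ∧ i.2.2 = j.2.2 + j.1.2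
    then 1 else 0

/-- Projector onto outcome `1` on both target qubits `A2, B2`. -/
def post11 :
    Matrix ((Fin 2 × Fin 2) × (Fin 2 × Fin 2)) ((Fin 2 × Fin 2) × (Fin 2 × Fin 2)) ℂ :=
  fun i j => if i = j ∧ i.2 = (1, 1) then 1 else 0

/-- Partial trace over the second pair of qubits `A2 B2`. -/
def ptrace2
    (M : Matrix ((Fin 2 × Fin 2) × (Fin 2 × Fin 2)) ((Fin 2 × Fin 2) × (Fin 2 × Fin 2)) ℂ) :
    Matrix (Fin 2 × Fin 2) (Fin 2 × Fin 2) ℂ :=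
  fun x y => ∑ z : Fin 2 × Fin 2, M (x, z) (y, z)

def cnotPerm : Equiv.Perm ((Fin 2 × Fin 2) × (Fin 2 × Fin 2)) :=
  Function.Involutive.toPerm (fun i => (i.1, (i.2.1 + i.1.1, i.2.2 + i.1.2)))
    (by intro i; revert i; decide)

lemma cnotPerm_symm : cnotPerm.symm = cnotPerm :=
  Function.Involutive.toPerm_symm _

lemma bilateralCNOT_eq_toMatrix : bilateralCNOT = cnotPerm.toPEquiv.toMatrix := by
  ext i j
  simp only [bilateralCNOT, PEquiv.toMatrix_apply, Equiv.toPEquiv_apply, Option.mem_some_iff]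
  congr 1
  revert i j
  decide

lemma bilateralCNOT_conjTranspose : bilateralCNOTᴴ = bilateralCNOT := by
  rw [bilateralCNOT_eq_toMatrix]
  ext i j
  simp only [conjTranspose_apply, PEquiv.toMatrix_apply, Equiv.toPEquiv_apply,
    Option.mem_some_iff, apply_ite star, star_one, star_zero]
  have hinv : cnotPerm j = i ↔ cnotPerm i = j := by
    rw [← Equiv.eq_symm_apply, cnotPerm_symm, eq_comm]
  simp only [hinv]

lemma bilateralCNOT_conj
    (M : Matrix ((Fin 2 × Fin 2) × (Fin 2 × Fin 2)) ((Fin 2 × Fin 2) × (Fin 2 × Fin 2)) ℂ) :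
    bilateralCNOT * M * bilateralCNOTᴴ = M.submatrix cnotPerm cnotPerm := by
  rw [bilateralCNOT_conjTranspose, bilateralCNOT_eq_toMatrix, PEquiv.toMatrix_toPEquiv_mul,
    PEquiv.mul_toMatrix_toPEquiv, submatrix_submatrix, cnotPerm_symm]
  rfl

lemma trace_ptrace2
    (M : Matrix ((Fin 2 × Fin 2) × (Fin 2 × Fin 2)) ((Fin 2 × Fin 2) × (Fin 2 × Fin 2)) ℂ) :
    (ptrace2 M).trace = M.trace := by
  simp only [trace, diag, ptrace2, Fintype.sum_prod_type]

lemma ptrace2_post11_conj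
    (M : Matrix ((Fin 2 × Fin 2) × (Fin 2 × Fin 2)) ((Fin 2 × Fin 2) × (Fin 2 × Fin 2)) ℂ) :
    ptrace2 (post11 * M * post11) = M.submatrix (·, (1, 1)) (·, (1, 1)) := by
  ext x y
  simp [ptrace2, mul_apply, post11, ite_and, Finset.sum_ite_eq, Finset.sum_ite_eq']

lemma proj_PsiPlus_apply (i j : Fin 2 × Fin 2) :
    proj PsiPlus i j =
      if (i = (0, 1) ∨ i = (1, 0)) ∧ (j = (0, 1) ∨ j = (1, 0)) then (1 / 2 : ℂ) else 0 := by
  have hsqrt : ((Real.sqrt 2)⁻¹ : ℂ) * ((Real.sqrt 2)⁻¹ : ℂ) = 1 / 2 := by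
    rw [← Complex.ofReal_inv, ← Complex.ofReal_mul, ← mul_inv, Real.mul_self_sqrt zero_le_two]
    norm_num
  obtain ⟨a, b⟩ := i; obtain ⟨c, d⟩ := j
  fin_cases a <;> fin_cases b <;> fin_cases c <;> fin_cases d <;>
    simp [proj, PsiPlus, ket, vecMulVec_apply, Prod.ext_iff, hsqrt]

lemma trace_proj_PsiPlus : (proj PsiPlus).trace = 1 := by
  simp only [trace, diag, proj_PsiPlus_apply, Fintype.sum_prod_type, Fin.sum_univ_two]
  norm_num

lemma proj_ket_apply (a b : Fin 2) (i j : Fin 2 × Fin 2) :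
    proj (ket a b) i j = if i = (a, b) ∧ j = (a, b) then 1 else 0 := by
  simp only [proj, ket, vecMulVec_apply, Pi.star_apply, apply_ite star, star_one, star_zero,
    ite_mul, one_mul, zero_mul, ite_and]

lemma Rstate_apply (p : ℝ) (i j : Fin 2 × Fin 2) :
    Rstate p i j =
      (if (i = (0, 1) ∨ i = (1, 0)) ∧ (j = (0, 1) ∨ j = (1, 0)) then (p / 2 : ℂ) else 0)
      + (if i = (1, 1) ∧ j = (1, 1) then ((1 - p : ℝ) : ℂ) else 0) := by
  simp only [Rstate, Matrix.add_apply, Matrix.smul_apply, proj_PsiPlus_apply, proj_ket_apply,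
    smul_eq_mul, mul_ite, mul_zero, mul_one, mul_one_div]

lemma Rstate_mul_Rstate_flip (p : ℝ) (x y : Fin 2 × Fin 2) :
    Rstate p x y * Rstate p (1 + x.1, 1 + x.2) (1 + y.1, 1 + y.2)
      = ((p ^ 2 / 2 : ℝ) : ℂ) * proj PsiPlus x y := by
  obtain ⟨a, b⟩ := x; obtain ⟨c, d⟩ := y
  simp only [Rstate_apply, proj_PsiPlus_apply]
  fin_cases a <;> fin_cases b <;> fin_cases c <;> fin_cases d <;> simp [Prod.ext_iff] <;> ring

lemma ptrace2_post11_bilateralCNOT_conj (p : ℝ) :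
    ptrace2 (post11 * (bilateralCNOT * (Rstate p ⊗ₖ Rstate p) * bilateralCNOTᴴ) * post11)
      = ((p ^ 2 / 2 : ℝ) : ℂ) • proj PsiPlus := by
  ext x y
  rw [ptrace2_post11_conj, bilateralCNOT_conj, submatrix_submatrix, Matrix.smul_apply,
    smul_eq_mul, ← Rstate_mul_Rstate_flip]
  rfl

theorem epld_extracts_bell_general (p : ℝ) (hp0 : 0 < p) :
    (post11 * (bilateralCNOT * (Rstate p ⊗ₖ Rstate p) * bilateralCNOTᴴ) * post11).trace
      = ((p ^ 2 / 2 : ℝ) : ℂ)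
    ∧ ((p ^ 2 / 2 : ℝ) : ℂ)⁻¹ •
        ptrace2 (post11 * (bilateralCNOT * (Rstate p ⊗ₖ Rstate p) * bilateralCNOTᴴ) * post11)
      = proj PsiPlus := by
  have hprob : ((p ^ 2 / 2 : ℝ) : ℂ) ≠ 0 := Complex.ofReal_ne_zero.mpr (by positivity)
  rw [← trace_ptrace2, ptrace2_post11_bilateralCNOT_conj, trace_smul, trace_proj_PsiPlus,
    smul_smul, inv_mul_cancel₀ hprob]
  exact ⟨mul_one _, one_smul _ _⟩

/-- EPL-D extracts a perfect Bell state from two copies of the R state: the post-selection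
on both target measurement outcomes being `1` occurs with probability `p²/2`, and the
post-measurement state on `A1 B1` is exactly `|Ψ⁺⟩⟨Ψ⁺|`. -/
theorem epld_extracts_bell (p : ℝ) (hp0 : 0 < p) (hp1 : p ≤ 1) :
    (post11 * (bilateralCNOT * (Rstate p ⊗ₖ Rstate p) * bilateralCNOTᴴ) * post11).trace
      = ((p ^ 2 / 2 : ℝ) : ℂ)
    ∧ ((p ^ 2 / 2 : ℝ) : ℂ)⁻¹ •
        ptrace2 (post11 * (bilateralCNOT * (Rstate p ⊗ₖ Rstate p) * bilateralCNOTᴴ) * post11)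
      = proj PsiPlus :=
  epld_extracts_bell_general p hp0

end
end
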